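/- arXiv:2605.12932 — 2 statements merged into one kernel-verified Lean document; each statement's English description precedes it below -/
import Mathlib

section
/- Theorem 3.1 (NPDo Ansatz for the block-diagonal objective). Let f and the partial Euclidean gradients ℋ_ℓ be as defined in the context. Let (P_1,…,P_m) be any tuple with P_i ∈ ℂ^{n_i×k_i} (not necessarily orthonormal), fix a mode 1 ≤ ℓ ≤ m, and let P̂_ℓ ∈ ℂ^{n_ℓ×k_ℓ} and η ∈ ℝ. If Re tr(P̂_ℓ^H ℋ_ℓ(P_1,…,P_m)) ≥ Re tr(P_ℓ^H ℋ_ℓ(P_1,…,P_m)) + η, then f(P_1,…,P_{ℓ-1}, P̂_ℓ, P_{ℓ+1},…,P_m) ≥ f(P_1,…,P_{ℓ-1}, P_ℓ, P_{ℓ+1},…,P_m) + η. -/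
open Matrix Filter Topology
open scoped ComplexOrder Classical

/-- The entries of the multi-mode product `B ×₁ P₁ᴴ ×₂ ⋯ ×ₘ Pₘᴴ` of an `m`-mode tensor
`B` of size `n 0 × ⋯ × n (m-1)` with the conjugate transposes of the matrices `P ℓ`.
The column index set of `P ℓ` is `(s : Fin t) × Fin (κ ℓ s)`, encoding the partition of
`k ℓ = Σ s, κ ℓ s` into `t` blocks (block `s` has the indices with first component `s`). -/
noncomputable def multiProd {m t : ℕ} {n : Fin m → ℕ} {κ : Fin m → Fin t → ℕ}
    (B : (∀ ℓ, Fin (n ℓ)) → ℂ)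
    (P : ∀ ℓ, Matrix (Fin (n ℓ)) ((s : Fin t) × Fin (κ ℓ s)) ℂ) :
    (∀ ℓ, (s : Fin t) × Fin (κ ℓ s)) → ℂ :=
  fun i => ∑ j : ∀ ℓ, Fin (n ℓ), (∏ ℓ, star (P ℓ (j ℓ) (i ℓ))) * B j

/-- The block-diagonal objective
`f(P₁,…,Pₘ) = ‖BDiag(B ×₁ P₁ᴴ ×₂ ⋯ ×ₘ Pₘᴴ)‖_F²`: the sum of `|T(i)|²` over all
multi-indices `i` whose components all lie in the same diagonal block. -/
noncomputable def fObj {m t : ℕ} {n : Fin m → ℕ} {κ : Fin m → Fin t → ℕ}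
    (B : (∀ ℓ, Fin (n ℓ)) → ℂ)
    (P : ∀ ℓ, Matrix (Fin (n ℓ)) ((s : Fin t) × Fin (κ ℓ s)) ℂ) : ℝ :=
  ∑ i : ∀ ℓ, (s : Fin t) × Fin (κ ℓ s),
    if ∃ s : Fin t, ∀ ℓ, (i ℓ).1 = s then Complex.normSq (multiProd B P i) else 0

/-- The tensor `B_{ℓ,s} = B ×₁ P_{1s}ᴴ ⋯ ×_{ℓ-1} P_{ℓ-1,s}ᴴ ×_{ℓ+1} P_{ℓ+1,s}ᴴ ⋯ ×ₘ P_{ms}ᴴ`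
(mode products by the `s`-th column blocks over every mode except `ℓ`), evaluated at the index
whose `ℓ`-th component is `a` and whose other components are given by `ih`. -/
noncomputable def Bls {m t : ℕ} {n : Fin m → ℕ} {κ : Fin m → Fin t → ℕ}
    (B : (∀ ℓ, Fin (n ℓ)) → ℂ)
    (P : ∀ ℓ, Matrix (Fin (n ℓ)) ((s : Fin t) × Fin (κ ℓ s)) ℂ)
    (ℓ : Fin m) (s : Fin t) (a : Fin (n ℓ))
    (ih : ∀ r : {r : Fin m // r ≠ ℓ}, Fin (κ r.1 s)) : ℂ :=
  ∑ j : ∀ r, Fin (n r),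
    if j ℓ = a then (∏ r : {r : Fin m // r ≠ ℓ}, star (P r.1 (j r.1) ⟨s, ih r⟩)) * B j else 0

/-- The matrix `H_{ℓs}(P₁,…,Pₘ) ∈ ℂ^{n_ℓ×n_ℓ}` with `(a,b)`-entry
`Σ_î B_{ℓ,s}(î[ℓ↦a])·conj(B_{ℓ,s}(î[ℓ↦b]))`, summed over multi-indices `î` with the
`ℓ`-th coordinate ignored. -/
noncomputable def Hmat {m t : ℕ} {n : Fin m → ℕ} {κ : Fin m → Fin t → ℕ}
    (B : (∀ ℓ, Fin (n ℓ)) → ℂ)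
    (P : ∀ ℓ, Matrix (Fin (n ℓ)) ((s : Fin t) × Fin (κ ℓ s)) ℂ)
    (ℓ : Fin m) (s : Fin t) : Matrix (Fin (n ℓ)) (Fin (n ℓ)) ℂ :=
  Matrix.of fun a b =>
    ∑ ih : ∀ r : {r : Fin m // r ≠ ℓ}, Fin (κ r.1 s),
      Bls B P ℓ s a ih * star (Bls B P ℓ s b ih)

/-- The partial Euclidean gradient `ℋ_ℓ(P₁,…,Pₘ) ∈ ℂ^{n_ℓ×k_ℓ}` of `fObj` with respect to
`P ℓ` (for the real inner product `⟨X,Y⟩ = Re tr(Yᴴ X)`): its `s`-th column block is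
`2 · H_{ℓs}(P₁,…,Pₘ) · P_{ℓs}`. -/
noncomputable def scrH {m t : ℕ} {n : Fin m → ℕ} {κ : Fin m → Fin t → ℕ}
    (B : (∀ ℓ, Fin (n ℓ)) → ℂ)
    (P : ∀ ℓ, Matrix (Fin (n ℓ)) ((s : Fin t) × Fin (κ ℓ s)) ℂ)
    (ℓ : Fin m) : Matrix (Fin (n ℓ)) ((s : Fin t) × Fin (κ ℓ s)) ℂ :=
  Matrix.of fun a sc => 2 * ∑ b, Hmat B P ℓ sc.1 a b * P ℓ b sc

/-! With every mode but `ℓ` contracted, the `s`-th diagonal block of the product is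
`B_{ℓ,s} ×_ℓ Q_sᴴ`, linear in the `ℓ`-th factor `Q`. Hence `f(…, Q, …) = Σ |c_Q|²` and
`Re tr(Qᴴ ℋ_ℓ) = 2 Re Σ c_Q · conj c_{P_ℓ}` for the entries `c_Q` of these blocks. Taking
`Q = P_ℓ` gives `Re tr(P_ℓᴴ ℋ_ℓ) = 2 f(P)`, and `2 Re(x ȳ) ≤ |x|² + |y|²` gives
`Re tr(Qᴴ ℋ_ℓ) ≤ f(…, Q, …) + f(P)`; with `Q = P̂_ℓ` the hypothesis then yields the claim. -/

open ComplexConjugate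

section BlockDiagonal

variable {ι : Type*} [Fintype ι] [DecidableEq ι] {t : ℕ} {κ : ι → Fin t → ℕ}

def piBlockEquiv (s : Fin t) :
    (∀ r, Fin (κ r s)) ≃ {i : ∀ r, (s' : Fin t) × Fin (κ r s') // ∀ r, (i r).1 = s} where
  toFun c := ⟨fun r => ⟨s, c r⟩, fun _ => rfl⟩
  invFun i r := Fin.cast (congrArg (κ r) (i.2 r)) (i.1 r).2
  left_inv _ := rfl
  right_inv i := Subtype.ext <| funext fun r =>
    Sigma.ext (i.2 r).symm ((Fin.heq_ext_iff (congrArg (κ r) (i.2 r)).symm).mpr rfl)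

theorem sum_ite_exists_forall_fst_eq {M : Type*} [AddCommMonoid M] (r₀ : ι)
    [DecidablePred fun i : ∀ r, (s : Fin t) × Fin (κ r s) => ∃ s, ∀ r, (i r).1 = s]
    (g : (∀ r, (s : Fin t) × Fin (κ r s)) → M) :
    (∑ i, if ∃ s, ∀ r, (i r).1 = s then g i else 0)
      = ∑ s, ∑ c : ∀ r, Fin (κ r s), g fun r => ⟨s, c r⟩ := by
  have split_block : ∀ i : ∀ r, (s : Fin t) × Fin (κ r s),
      (if ∃ s, ∀ r, (i r).1 = s then g i else 0)
        = ∑ s, if ∀ r, (i r).1 = s then g i else 0 := fun i => by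
    rw [Fintype.sum_eq_single (i r₀).1 fun s hs => if_neg fun h => hs (h r₀).symm]
    exact if_congr ⟨fun ⟨s, hs⟩ r => (hs r).trans (hs r₀).symm, fun h => ⟨_, h⟩⟩ rfl rfl
  simp_rw [split_block]
  rw [Finset.sum_comm]
  refine Finset.sum_congr rfl fun s _ => ?_
  rw [← Finset.sum_filter, ← Finset.sum_subtype_eq_sum_filter, Finset.subtype_univ]
  exact (Fintype.sum_equiv (piBlockEquiv s) _ _ fun _ => rfl).symm

end BlockDiagonal

theorem Complex.two_mul_re_mul_conj_le (x y : ℂ) :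
    2 * (x * conj y).re ≤ Complex.normSq x + Complex.normSq y := by
  have := Complex.normSq_nonneg (x - y)
  rw [Complex.normSq_sub] at this
  linarith

section Objective

variable {m t : ℕ} {n : Fin m → ℕ} {κ : Fin m → Fin t → ℕ}
  (B : (∀ ℓ, Fin (n ℓ)) → ℂ) (P : ∀ ℓ, Matrix (Fin (n ℓ)) ((s : Fin t) × Fin (κ ℓ s)) ℂ)
  (ℓ : Fin m) (Q : Matrix (Fin (n ℓ)) ((s : Fin t) × Fin (κ ℓ s)) ℂ)

/-- The entries of `B_{ℓ,s} ×_ℓ Q_sᴴ`, i.e. of the `s`-th diagonal block of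
`B ×₁ P₁ᴴ ⋯ ×ₘ Pₘᴴ` after `P ℓ` is replaced by `Q`. -/
noncomputable def diagBlock (sc : (s : Fin t) × Fin (κ ℓ s))
    (ih : ∀ r : {r : Fin m // r ≠ ℓ}, Fin (κ r.1 sc.1)) : ℂ :=
  ∑ a, star (Q a sc) * Bls B P ℓ sc.1 a ih

theorem multiProd_update_diag (s : Fin t) (c : ∀ r, Fin (κ r s)) :
    multiProd B (Function.update P ℓ Q) (fun r => ⟨s, c r⟩)
      = diagBlock B P ℓ Q ⟨s, c ℓ⟩ (fun r => c r.1) := by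
  simp only [multiProd, diagBlock, Bls, Finset.mul_sum, mul_ite, mul_zero]
  rw [Finset.sum_comm]
  refine Finset.sum_congr rfl fun j _ => ?_
  rw [Fintype.sum_ite_eq, Fintype.prod_eq_mul_prod_subtype_ne _ ℓ, Function.update_self,
    mul_assoc]
  congr 2
  exact Finset.prod_congr rfl fun r _ => by rw [Function.update_of_ne r.2]

theorem fObj_update_eq_sum_normSq :
    fObj B (Function.update P ℓ Q)
      = ∑ sc, ∑ ih, Complex.normSq (diagBlock B P ℓ Q sc ih) := by
  rw [fObj, sum_ite_exists_forall_fst_eq ℓ, ← Finset.univ_sigma_univ, Finset.sum_sigma]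
  refine Finset.sum_congr rfl fun s _ => ?_
  rw [Fintype.sum_equiv (Equiv.piSplitAt ℓ fun r => Fin (κ r s)) _
    (fun p => Complex.normSq (diagBlock B P ℓ Q ⟨s, p.1⟩ p.2))
    fun c => congrArg Complex.normSq (multiProd_update_diag B P ℓ Q s c), Fintype.sum_prod_type]

theorem fObj_eq_sum_normSq :
    fObj B P = ∑ sc, ∑ ih, Complex.normSq (diagBlock B P ℓ (P ℓ) sc ih) := by
  rw [← fObj_update_eq_sum_normSq, Function.update_eq_self]

theorem trace_conjTranspose_mul_scrH :
    trace (Qᴴ * scrH B P ℓ)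
      = 2 * ∑ sc, ∑ ih, diagBlock B P ℓ Q sc ih * conj (diagBlock B P ℓ (P ℓ) sc ih) := by
  rw [trace, Finset.mul_sum]
  refine Finset.sum_congr rfl fun sc _ => ?_
  simp only [diag_apply, mul_apply, conjTranspose_apply, scrH, Hmat, of_apply, diagBlock,
    map_sum, map_mul, Finset.mul_sum, Finset.sum_mul]
  rw [Finset.sum_comm_cycle]
  refine Finset.sum_congr rfl fun ih _ => Finset.sum_comm.trans <|
    Finset.sum_congr rfl fun b _ => Finset.sum_congr rfl fun a _ => ?_
  simp only [Complex.star_def, Complex.conj_conj]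
  ring

theorem re_trace_conjTranspose_mul_scrH_self :
    (trace ((P ℓ)ᴴ * scrH B P ℓ)).re = 2 * fObj B P := by
  simp_rw [trace_conjTranspose_mul_scrH, Complex.mul_conj, fObj_eq_sum_normSq B P ℓ]
  norm_cast

theorem re_trace_conjTranspose_mul_scrH_le :
    (trace (Qᴴ * scrH B P ℓ)).re ≤ fObj B (Function.update P ℓ Q) + fObj B P := by
  rw [trace_conjTranspose_mul_scrH, fObj_update_eq_sum_normSq, fObj_eq_sum_normSq B P ℓ,
    ← Finset.sum_add_distrib, Finset.mul_sum, Complex.re_sum]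
  gcongr with sc
  rw [← Finset.sum_add_distrib, Finset.mul_sum, Complex.re_sum]
  gcongr with ih
  simpa using Complex.two_mul_re_mul_conj_le (diagBlock B P ℓ Q sc ih) _

end Objective

theorem stmt_7_general (m t : ℕ)
    (n : Fin m → ℕ)
    (κ : Fin m → Fin t → ℕ)
    (B : (∀ ℓ, Fin (n ℓ)) → ℂ)
    (P : ∀ ℓ, Matrix (Fin (n ℓ)) ((s : Fin t) × Fin (κ ℓ s)) ℂ)
    (ℓ : Fin m) (Phat : Matrix (Fin (n ℓ)) ((s : Fin t) × Fin (κ ℓ s)) ℂ) (η : ℝ)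
    (hineq : (Matrix.trace ((P ℓ)ᴴ * scrH B P ℓ)).re + η
        ≤ (Matrix.trace (Phatᴴ * scrH B P ℓ)).re) :
    fObj B P + η ≤ fObj B (Function.update P ℓ Phat) := by
  have hself := re_trace_conjTranspose_mul_scrH_self B P ℓ
  have hle := re_trace_conjTranspose_mul_scrH_le B P ℓ Phat
  linarith

/-- Theorem 3.1, NPDo Ansatz for the block-diagonal objective:
if `Re tr(P̂_ℓᴴ ℋ_ℓ(P₁,…,Pₘ)) ≥ Re tr(P_ℓᴴ ℋ_ℓ(P₁,…,Pₘ)) + η` then replacing `P ℓ` by `P̂ ℓ`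
increases the objective by at least `η`. -/
theorem stmt_7 (m t : ℕ) (hm : 1 ≤ m) (ht : 1 ≤ t)
    (n : Fin m → ℕ) (hn : ∀ ℓ, 1 ≤ n ℓ)
    (κ : Fin m → Fin t → ℕ) (hκ : ∀ ℓ s, 1 ≤ κ ℓ s)
    (hkn : ∀ ℓ, (∑ s, κ ℓ s) ≤ n ℓ)
    (B : (∀ ℓ, Fin (n ℓ)) → ℂ)
    (P : ∀ ℓ, Matrix (Fin (n ℓ)) ((s : Fin t) × Fin (κ ℓ s)) ℂ)
    (ℓ : Fin m) (Phat : Matrix (Fin (n ℓ)) ((s : Fin t) × Fin (κ ℓ s)) ℂ) (η : ℝ)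
    (hineq : (Matrix.trace ((P ℓ)ᴴ * scrH B P ℓ)).re + η
        ≤ (Matrix.trace (Phatᴴ * scrH B P ℓ)).re) :
    fObj B P + η ≤ fObj B (Function.update P ℓ Phat) :=
  stmt_7_general m t n κ B P ℓ Phat η hineq
end

section
/- Per-sweep ascent bound for the Gauss–Seidel NPDo iteration. Let {(P_1^{(j)},…,P_m^{(j)})}_{j≥0} be generated by the Gauss–Seidel NPDo iteration as in the context. Then for every j ≥ 0, f(P_1^{(j+1)},…,P_m^{(j+1)}) ≥ f(P_1^{(j)},…,P_m^{(j)}) + Σ_{ℓ=1}^m [‖ℋ̂_ℓ^{(j)}‖_tr − Re tr((P_ℓ^{(j)})^H ℋ̂_ℓ^{(j)})], and each bracketed term ‖ℋ̂_ℓ^{(j)}‖_tr − Re tr((P_ℓ^{(j)})^H ℋ̂_ℓ^{(j)}) is nonnegative. -/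
open Matrix Filter Topology
open scoped ComplexOrder Classical

/-- The trace norm (nuclear norm) of a complex matrix: the sum of all its singular values,
computed as the sum of the square roots of the eigenvalues of `Hᴴ * H`. -/
noncomputable def traceNorm {α β : Type*} [Fintype α] [Fintype β] [DecidableEq β]
    (H : Matrix α β ℂ) : ℝ :=
  ∑ i, Real.sqrt ((Matrix.posSemidef_conjTranspose_mul_self H).1.eigenvalues i)

/-! With all modes but `ℓ` fixed, `f` is a convex quadratic function of `P_ℓ` with gradient
`ℋ_ℓ`, so replacing `P_ℓ` by `Q` raises `f` by at least `Re tr((Q - P_ℓ)ᴴ ℋ_ℓ)`. If `ℋ_ℓ = QΛ`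
with `Q` orthonormal and `Λ ⪰ 0`, then `Re tr(Qᴴ ℋ_ℓ) = tr Λ = ‖ℋ_ℓ‖_tr`, while
`Re tr(Pᴴ Q Λ) ≤ tr Λ` for every orthonormal `P` because `tr((P - Q)ᴴ (P - Q) Λ) ≥ 0`.
Adding up the gains of the `m` mode updates of a sweep gives the bound. -/

open scoped MatrixOrder

namespace Matrix

variable {α β : Type*} [Fintype α] [Fintype β]

lemma PosSemidef.re_trace_sqrt [DecidableEq β] {M : Matrix β β ℂ} (hM : M.PosSemidef) :
    (CFC.sqrt M).trace.re = ∑ i, √(hM.1.eigenvalues i) := by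
  rw [CFC.sqrt_eq_cfc, cfc_nnreal_eq_real _ M, hM.1.cfc_eq, IsHermitian.cfc,
    Unitary.conjStarAlgAut_apply, trace_mul_cycle,
    mem_unitaryGroup_iff'.mp hM.1.eigenvectorUnitary.2, one_mul, trace_diagonal, Complex.re_sum]
  simp [max_eq_left (hM.eigenvalues_nonneg _)]

lemma PosSemidef.re_trace_conjTranspose_mul_self_mul_nonneg {Λ : Matrix β β ℂ}
    (hΛ : Λ.PosSemidef) (X : Matrix α β ℂ) : 0 ≤ (Xᴴ * X * Λ).trace.re := by
  obtain ⟨R, rfl⟩ := CStarAlgebra.nonneg_iff_eq_star_mul_self.mp hΛ.nonneg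
  have h : (Xᴴ * X * (star R * R)).trace = ((X * Rᴴ)ᴴ * (X * Rᴴ)).trace := by
    rw [star_eq_conjTranspose, ← Matrix.mul_assoc, trace_mul_comm, conjTranspose_mul,
      conjTranspose_conjTranspose]
    simp only [Matrix.mul_assoc]
  exact h ▸ (Complex.nonneg_iff.mp (posSemidef_conjTranspose_mul_self _).trace_nonneg).1

lemma re_trace_conjTranspose_mul_mul_le [DecidableEq β] {P Q : Matrix α β ℂ}
    {Λ : Matrix β β ℂ} (hP : Pᴴ * P = 1) (hQ : Qᴴ * Q = 1) (hΛ : Λ.PosSemidef) :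
    (Pᴴ * (Q * Λ)).trace.re ≤ Λ.trace.re := by
  have hexp : (P - Q)ᴴ * (P - Q) * Λ = Λ + Λ - Pᴴ * (Q * Λ) - Qᴴ * P * Λ := by
    simp only [conjTranspose_sub, Matrix.sub_mul, Matrix.mul_sub, hP, hQ, Matrix.one_mul,
      Matrix.mul_assoc]
    abel
  have hconj : (Qᴴ * P * Λ).trace = star (Pᴴ * (Q * Λ)).trace := by
    rw [← trace_conjTranspose, conjTranspose_mul, conjTranspose_mul, hΛ.1.eq,
      conjTranspose_conjTranspose, trace_mul_comm, Matrix.mul_assoc]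
  have h := hΛ.re_trace_conjTranspose_mul_self_mul_nonneg (P - Q)
  rw [hexp, trace_sub, trace_sub, trace_add, hconj] at h
  simp only [Complex.sub_re, Complex.add_re, Complex.star_def, Complex.conj_re] at h
  linarith

end Matrix

section traceNorm

variable {α β : Type*} [Fintype α] [Fintype β] [DecidableEq β]

lemma traceNorm_eq_re_trace_sqrt (H : Matrix α β ℂ) :
    traceNorm H = (CFC.sqrt (Hᴴ * H)).trace.re :=
  ((posSemidef_conjTranspose_mul_self H).re_trace_sqrt).symm

lemma traceNorm_mul_of_posSemidef {Q : Matrix α β ℂ} {Λ : Matrix β β ℂ} (hQ : Qᴴ * Q = 1)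
    (hΛ : Λ.PosSemidef) : traceNorm (Q * Λ) = Λ.trace.re := by
  have hsq : (Q * Λ)ᴴ * (Q * Λ) = Λ * Λ := by
    rw [conjTranspose_mul, hΛ.1.eq, Matrix.mul_assoc, ← Matrix.mul_assoc Qᴴ, hQ, Matrix.one_mul]
  rw [traceNorm_eq_re_trace_sqrt, hsq, CFC.sqrt_mul_self Λ hΛ.nonneg]

lemma re_trace_conjTranspose_mul_le_traceNorm {P Q : Matrix α β ℂ} {Λ : Matrix β β ℂ}
    (hP : Pᴴ * P = 1) (hQ : Qᴴ * Q = 1) (hΛ : Λ.PosSemidef) :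
    (Pᴴ * (Q * Λ)).trace.re ≤ traceNorm (Q * Λ) :=
  traceNorm_mul_of_posSemidef hQ hΛ ▸ re_trace_conjTranspose_mul_mul_le hP hQ hΛ

end traceNorm

lemma Fin.add_sum_le_of_add_le {M : Type*} [AddCommMonoid M] [PartialOrder M]
    [IsOrderedAddMonoid M] {m : ℕ} (g : ℕ → M) (d : Fin m → M)
    (h : ∀ ℓ : Fin m, g ℓ + d ℓ ≤ g (ℓ + 1)) : g 0 + ∑ ℓ, d ℓ ≤ g m := by
  induction m with
  | zero => simp
  | succ m ih =>
    rw [Fin.sum_univ_castSucc, ← add_assoc]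
    calc g 0 + ∑ ℓ : Fin m, d ℓ.castSucc + d (Fin.last m) ≤ g m + d (Fin.last m) := by
          gcongr; exact ih _ fun ℓ => h ℓ.castSucc
      _ ≤ g (m + 1) := h (Fin.last m)

section partialSweep

variable {m : ℕ} {β : Fin m → Type*} (Q P : ∀ r, β r)

def partialSweep (c : ℕ) : ∀ r, β r := fun r => if (r : ℕ) < c then Q r else P r

@[simp] lemma partialSweep_zero : partialSweep Q P 0 = P := by
  funext r; simp [partialSweep]

lemma partialSweep_of_le {c : ℕ} (hc : m ≤ c) : partialSweep Q P c = Q := by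
  funext r; simp [partialSweep, r.isLt.trans_le hc]

@[simp] lemma partialSweep_apply_self (ℓ : Fin m) : partialSweep Q P ℓ ℓ = P ℓ := by
  simp [partialSweep]

lemma partialSweep_succ (ℓ : Fin m) :
    partialSweep Q P (ℓ + 1) = Function.update (partialSweep Q P ℓ) ℓ (Q ℓ) := by
  funext r
  rcases eq_or_ne r ℓ with rfl | hr
  · simp [partialSweep]
  · have hval : (r : ℕ) ≠ ℓ := Fin.val_ne_of_ne hr
    simp only [partialSweep, Function.update_of_ne hr]
    split_ifs <;> first | rfl | omega

end partialSweep

lemma Complex.two_mul_re_sub_mul_star_le_normSq_sub (x y : ℂ) :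
    2 * ((y - x) * star x).re ≤ normSq y - normSq x := by
  have h := Complex.normSq_add (y - x) x
  rw [sub_add_cancel, ← Complex.star_def] at h
  nlinarith [Complex.normSq_nonneg (y - x)]

section blockObjective

variable {m t : ℕ} {n : Fin m → ℕ} {κ : Fin m → Fin t → ℕ} (B : (∀ ℓ, Fin (n ℓ)) → ℂ)
  (P : ∀ ℓ, Matrix (Fin (n ℓ)) ((s : Fin t) × Fin (κ ℓ s)) ℂ)

/-- The entry `(B_{ℓ,s} ×_ℓ Q_sᴴ)(a, î)`, where `Q_s` is the `s`-th column block of `Q`. -/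
noncomputable def modeProdBls (ℓ : Fin m) (Q : Matrix (Fin (n ℓ)) ((s : Fin t) × Fin (κ ℓ s)) ℂ)
    (s : Fin t) (a : Fin (κ ℓ s)) (ih : ∀ r : {r : Fin m // r ≠ ℓ}, Fin (κ r.1 s)) : ℂ :=
  ∑ b, star (Q b ⟨s, a⟩) * Bls B P ℓ s b ih

lemma multiProd_diag (ℓ : Fin m) (s : Fin t) (c : ∀ r, Fin (κ r s)) :
    multiProd B P (fun r => ⟨s, c r⟩) = modeProdBls B P ℓ (P ℓ) s (c ℓ) (fun r => c r.1) := by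
  simp only [multiProd, modeProdBls, Bls, Finset.mul_sum, mul_ite, mul_zero]
  rw [Finset.sum_comm]
  refine Finset.sum_congr rfl fun j _ => ?_
  rw [Finset.sum_ite_eq, if_pos (Finset.mem_univ _),
    Fintype.prod_eq_mul_prod_subtype_ne _ ℓ, mul_assoc]

lemma fObj_eq_sum_diag [NeZero m] :
    fObj B P = ∑ s : Fin t, ∑ c : ∀ r, Fin (κ r s),
      Complex.normSq (multiProd B P (fun r => ⟨s, c r⟩)) := by
  rw [← Fintype.sum_sigma (fun x : (s : Fin t) × (∀ r, Fin (κ r s)) =>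
    Complex.normSq (multiProd B P (fun r => ⟨x.1, x.2 r⟩))), fObj]
  refine (Fintype.sum_of_injective (fun x r => ⟨x.1, x.2 r⟩) ?_ _ _ ?_ fun x => ?_).symm
  · rintro ⟨s, c⟩ ⟨s', c'⟩ h
    obtain rfl : s = s' := congrArg (fun i => (i 0).1) h
    simpa [funext_iff] using h
  · intro i hi
    refine if_neg fun ⟨s, hs⟩ => hi ⟨⟨s, fun r => cast (congrArg (fun u => Fin (κ r u)) (hs r))
      (i r).2⟩, funext fun r => Sigma.ext (hs r).symm (cast_heq _ _)⟩
  · exact (if_pos ⟨x.1, fun _ => rfl⟩).symm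

lemma fObj_eq_sum_modeProdBls (ℓ : Fin m) :
    fObj B P = ∑ s : Fin t, ∑ a : Fin (κ ℓ s), ∑ ih : ∀ r : {r : Fin m // r ≠ ℓ}, Fin (κ r.1 s),
      Complex.normSq (modeProdBls B P ℓ (P ℓ) s a ih) := by
  have : NeZero m := ⟨ℓ.pos.ne'⟩
  rw [fObj_eq_sum_diag B P]
  refine Finset.sum_congr rfl fun s _ => ?_
  rw [← Fintype.sum_prod_type', ← (Equiv.piSplitAt ℓ (fun r => Fin (κ r s))).sum_comp]
  simp [multiProd_diag B P ℓ, Equiv.piSplitAt_apply]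

lemma Bls_update (ℓ : Fin m) (Q : Matrix (Fin (n ℓ)) ((s : Fin t) × Fin (κ ℓ s)) ℂ) :
    Bls B (Function.update P ℓ Q) ℓ = Bls B P ℓ := by
  funext s a ih
  simp only [Bls]
  refine Finset.sum_congr rfl fun j _ => ?_
  congr 2
  exact Finset.prod_congr rfl fun r _ => by rw [Function.update_of_ne r.2]

lemma fObj_update (ℓ : Fin m) (Q : Matrix (Fin (n ℓ)) ((s : Fin t) × Fin (κ ℓ s)) ℂ) :
    fObj B (Function.update P ℓ Q) = ∑ s : Fin t, ∑ a : Fin (κ ℓ s),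
      ∑ ih : ∀ r : {r : Fin m // r ≠ ℓ}, Fin (κ r.1 s),
      Complex.normSq (modeProdBls B P ℓ Q s a ih) := by
  rw [fObj_eq_sum_modeProdBls _ _ ℓ]
  simp only [modeProdBls, Bls_update, Function.update_self]

lemma modeProdBls_sub (ℓ : Fin m) (Q Q' : Matrix (Fin (n ℓ)) ((s : Fin t) × Fin (κ ℓ s)) ℂ)
    (s : Fin t) (a : Fin (κ ℓ s)) (ih : ∀ r : {r : Fin m // r ≠ ℓ}, Fin (κ r.1 s)) :
    modeProdBls B P ℓ (Q - Q') s a ih =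
      modeProdBls B P ℓ Q s a ih - modeProdBls B P ℓ Q' s a ih := by
  simp [modeProdBls, sub_mul, Finset.sum_sub_distrib]

lemma trace_conjTranspose_mul_scrH_s11 (ℓ : Fin m)
    (D : Matrix (Fin (n ℓ)) ((s : Fin t) × Fin (κ ℓ s)) ℂ) :
    (Dᴴ * scrH B P ℓ).trace = 2 * ∑ s : Fin t, ∑ a : Fin (κ ℓ s),
      ∑ ih : ∀ r : {r : Fin m // r ≠ ℓ}, Fin (κ r.1 s),
      modeProdBls B P ℓ D s a ih * star (modeProdBls B P ℓ (P ℓ) s a ih) := by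
  rw [trace, ← Finset.univ_sigma_univ, Finset.sum_sigma, Finset.mul_sum]
  refine Finset.sum_congr rfl fun s _ => ?_
  rw [Finset.mul_sum]
  refine Finset.sum_congr rfl fun a _ => ?_
  simp only [diag, mul_apply, conjTranspose_apply, scrH, Hmat, of_apply, modeProdBls, star_sum,
    star_mul', star_star, Finset.sum_mul, Finset.mul_sum]
  refine (Finset.sum_congr rfl fun b _ => Finset.sum_comm).trans <| Finset.sum_comm.trans <|
    Finset.sum_congr rfl fun ih _ => Finset.sum_comm.trans <|
      Finset.sum_congr rfl fun c _ => Finset.sum_congr rfl fun b _ => by ring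

lemma re_trace_conjTranspose_sub_mul_scrH_le (ℓ : Fin m)
    (Q : Matrix (Fin (n ℓ)) ((s : Fin t) × Fin (κ ℓ s)) ℂ) :
    ((Q - P ℓ)ᴴ * scrH B P ℓ).trace.re ≤ fObj B (Function.update P ℓ Q) - fObj B P := by
  rw [trace_conjTranspose_mul_scrH_s11, fObj_update, fObj_eq_sum_modeProdBls B P ℓ]
  simp only [Complex.mul_re, Complex.re_ofNat, Complex.im_ofNat, zero_mul, sub_zero,
    Complex.re_sum, ← Finset.sum_sub_distrib, Finset.mul_sum,
    modeProdBls_sub]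
  gcongr
  exact Complex.two_mul_re_sub_mul_star_le_normSq_sub _ _

end blockObjective

lemma fObj_add_traceNorm_sub_le_fObj_update {m t : ℕ} {n : Fin m → ℕ} {κ : Fin m → Fin t → ℕ}
    (B : (∀ ℓ, Fin (n ℓ)) → ℂ) (P : ∀ ℓ, Matrix (Fin (n ℓ)) ((s : Fin t) × Fin (κ ℓ s)) ℂ)
    {ℓ : Fin m} {Q : Matrix (Fin (n ℓ)) ((s : Fin t) × Fin (κ ℓ s)) ℂ}
    {Λ : Matrix ((s : Fin t) × Fin (κ ℓ s)) ((s : Fin t) × Fin (κ ℓ s)) ℂ}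
    (hQ : Qᴴ * Q = 1) (hΛ : Λ.PosSemidef) (hH : scrH B P ℓ = Q * Λ) :
    fObj B P + (traceNorm (scrH B P ℓ) - ((P ℓ)ᴴ * scrH B P ℓ).trace.re) ≤
      fObj B (Function.update P ℓ Q) := by
  have hQH : (Qᴴ * scrH B P ℓ).trace = Λ.trace := by
    rw [hH, ← Matrix.mul_assoc, hQ, Matrix.one_mul]
  have hconv := re_trace_conjTranspose_sub_mul_scrH_le B P ℓ Q
  rw [conjTranspose_sub, Matrix.sub_mul, trace_sub, Complex.sub_re, hQH] at hconv
  rw [hH, traceNorm_mul_of_posSemidef hQ hΛ, ← hH]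
  linarith

theorem stmt_11_general (m t : ℕ)
    (n : Fin m → ℕ)
    (κ : Fin m → Fin t → ℕ)
    (B : (∀ ℓ, Fin (n ℓ)) → ℂ)
    (P : ℕ → ∀ ℓ, Matrix (Fin (n ℓ)) ((s : Fin t) × Fin (κ ℓ s)) ℂ)
    (horth : ∀ j ℓ, (P j ℓ)ᴴ * P j ℓ = 1)
    (hatH : ∀ j : ℕ, ∀ ℓ : Fin m, Matrix (Fin (n ℓ)) ((s : Fin t) × Fin (κ ℓ s)) ℂ)
    (hhatH : ∀ j ℓ, hatH j ℓ = scrH B (fun r => if r < ℓ then P (j + 1) r else P j r) ℓ)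
    (hGS : ∀ j ℓ, ∃ Λ : Matrix ((s : Fin t) × Fin (κ ℓ s)) ((s : Fin t) × Fin (κ ℓ s)) ℂ,
      Λ.PosSemidef ∧ hatH j ℓ = P (j + 1) ℓ * Λ)
    :
    ∀ j : ℕ,
      (∀ ℓ, 0 ≤ traceNorm (hatH j ℓ) - (Matrix.trace ((P j ℓ)ᴴ * hatH j ℓ)).re) ∧
      fObj B (P j) +
          ∑ ℓ, (traceNorm (hatH j ℓ) - (Matrix.trace ((P j ℓ)ᴴ * hatH j ℓ)).re)
        ≤ fObj B (P (j + 1)) := by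
  intro j
  -- `r < ℓ` on `Fin m` unfolds to `(r : ℕ) < ℓ`.
  have hsweep : ∀ ℓ, hatH j ℓ = scrH B (partialSweep (P (j + 1)) (P j) ℓ) ℓ := hhatH j
  refine ⟨fun ℓ => ?_, ?_⟩
  · obtain ⟨Λ, hΛ, hH⟩ := hGS j ℓ
    rw [hH]
    linarith [re_trace_conjTranspose_mul_le_traceNorm (horth j ℓ) (horth (j + 1) ℓ) hΛ]
  · have hstep : ∀ ℓ : Fin m, fObj B (partialSweep (P (j + 1)) (P j) ℓ) +
        (traceNorm (hatH j ℓ) - ((P j ℓ)ᴴ * hatH j ℓ).trace.re) ≤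
          fObj B (partialSweep (P (j + 1)) (P j) (ℓ + 1)) := by
      intro ℓ
      obtain ⟨Λ, hΛ, hH⟩ := hGS j ℓ
      rw [hsweep] at hH ⊢
      rw [partialSweep_succ, ← partialSweep_apply_self (P (j + 1)) (P j) ℓ]
      exact fObj_add_traceNorm_sub_le_fObj_update B _ (horth (j + 1) ℓ) hΛ hH
    simpa [partialSweep_of_le _ _ le_rfl] using
      Fin.add_sum_le_of_add_le (fun c => fObj B (partialSweep (P (j + 1)) (P j) c)) _ hstep

/-- per-sweep ascent bound: each Gauss–Seidel sweep increases the objective by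
at least `Σ_ℓ [‖ℋ̂_ℓ^{(j)}‖_tr − Re tr((P_ℓ^{(j)})ᴴ ℋ̂_ℓ^{(j)})]`, each term being nonnegative. -/
theorem stmt_11 (m t : ℕ) (hm : 1 ≤ m) (ht : 1 ≤ t)
    (n : Fin m → ℕ) (hn : ∀ ℓ, 1 ≤ n ℓ)
    (κ : Fin m → Fin t → ℕ) (hκ : ∀ ℓ s, 1 ≤ κ ℓ s)
    (hkn : ∀ ℓ, (∑ s, κ ℓ s) ≤ n ℓ)
    (B : (∀ ℓ, Fin (n ℓ)) → ℂ)
    (P : ℕ → ∀ ℓ, Matrix (Fin (n ℓ)) ((s : Fin t) × Fin (κ ℓ s)) ℂ)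
    (horth : ∀ j ℓ, (P j ℓ)ᴴ * P j ℓ = 1)
    (hatH : ∀ j : ℕ, ∀ ℓ : Fin m, Matrix (Fin (n ℓ)) ((s : Fin t) × Fin (κ ℓ s)) ℂ)
    (hhatH : ∀ j ℓ, hatH j ℓ = scrH B (fun r => if r < ℓ then P (j + 1) r else P j r) ℓ)
    (hGS : ∀ j ℓ, ∃ Λ : Matrix ((s : Fin t) × Fin (κ ℓ s)) ((s : Fin t) × Fin (κ ℓ s)) ℂ,
      Λ.PosSemidef ∧ hatH j ℓ = P (j + 1) ℓ * Λ)
    :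
    ∀ j : ℕ,
      (∀ ℓ, 0 ≤ traceNorm (hatH j ℓ) - (Matrix.trace ((P j ℓ)ᴴ * hatH j ℓ)).re) ∧
      fObj B (P j) +
          ∑ ℓ, (traceNorm (hatH j ℓ) - (Matrix.trace ((P j ℓ)ᴴ * hatH j ℓ)).re)
        ≤ fObj B (P (j + 1)) :=
  stmt_11_general m t n κ B P horth hatH hhatH hGS
end
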